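/- arXiv:2304.00849 — 2 statements merged into one kernel-verified Lean document; each statement's English description precedes it below -/
import Mathlib

section
/- For r,s ≥ 4 both even, the torus C_r □ C_s has adim_4(C_r □ C_s) = 2: any vertex together with its unique diametral (antipodal) vertex is a 4-ARS, and no singleton is a 4-ARS since each single vertex forms only a 1-ARS. -/
open SimpleGraph

/-- Two vertices have the same distances to every vertex of `S`. -/
def sameDists {V : Type*} (G : SimpleGraph V) (S : Set V) (x y : V) : Prop :=
  ∀ z ∈ S, G.dist x z = G.dist y z

/-- The equivalence class (outside `S`) of `x` under the equal-distance relation `R_S`. -/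
def cls {V : Type*} (G : SimpleGraph V) (S : Set V) (x : V) : Set V :=
  {y | y ∉ S ∧ sameDists G S x y}

/-- `S` is a `k`-antiresolving set: `S` is nonempty, does not cover `V`, and the minimum
size of an equivalence class of `R_S` on `V ∖ S` equals `k`. -/
def IsKARS {V : Type*} (G : SimpleGraph V) (k : ℕ) (S : Set V) : Prop :=
  S.Nonempty ∧ Sᶜ.Nonempty ∧
    (∀ x ∉ S, k ≤ (cls G S x).ncard) ∧ ∃ x ∉ S, (cls G S x).ncard = k

/-- The `k`-metric antidimension: the smallest cardinality of a `k`-antiresolving set,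
`⊤` (i.e. `+∞`) if none exists. -/
noncomputable def adim {V : Type*} (G : SimpleGraph V) (k : ℕ) : ℕ∞ :=
  sInf ((fun S => (S.ncard : ℕ∞)) '' {S : Set V | IsKARS G k S})

/-! On the cycle `C_n` with `n` even, `d(z, v) + d(z, v + n/2) = n/2` for all `z, v`, and distances
in `C_r □ C_s` add over the coordinates; so with `x̄ := x + (r/2, s/2)` and `D := (r + s)/2` every
vertex `z` satisfies `d(z, x) + d(z, x̄) = D`. Hence `x̄` is the only vertex at distance `D` from
`x`, so it is alone in its class for `S = {x}`, while for `S = {x, x̄}` the class of a vertex `y`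
is the whole sphere of radius `d(y, x)` about `x`. For `0 < c < D` that sphere has at least four
vertices: `(x₁ ± p, x₂ ± q)` with `p + q = c` when `2 ≤ c ≤ D - 2`, the four neighbours of `x`
when `c = 1` (exactly four: the torus is 4-regular), and those of `x̄` when `c = D - 1`. -/

namespace SimpleGraph

theorem cycleGraph_dist_le_val_sub {n : ℕ} (u v : Fin n) :
    (cycleGraph n).dist u v ≤ (v - u).val := by
  induction hk : (v - u).val generalizing v with
  | zero =>
    obtain rfl : v = u := by zify at hk; fin_omega
    simp
  | succ k ih =>
    have hn : 2 ≤ n := by have := (v - u).isLt; omega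
    have : NeZero n := ⟨by omega⟩
    have h1 : (1 : Fin n).val = 1 := by rw [Fin.val_one', Nat.mod_eq_of_lt hn]
    have hadj : (cycleGraph n).Adj (v - 1) v := by
      rw [cycleGraph_adj', sub_sub_cancel, h1]; exact Or.inr rfl
    have hpred : (cycleGraph n).dist u (v - 1) ≤ k := ih (v - 1) (by zify at *; fin_omega)
    calc (cycleGraph n).dist u v
        ≤ (cycleGraph n).dist u (v - 1) + (cycleGraph n).dist (v - 1) v :=
          (cycleGraph_preconnected u (v - 1)).dist_triangle_left v
      _ ≤ k + 1 := by rw [dist_eq_one_iff_adj.2 hadj]; omega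

theorem Walk.min_val_sub_le_length {n : ℕ} {u v : Fin n} (p : (cycleGraph n).Walk u v) :
    min (v - u).val (u - v).val ≤ p.length := by
  induction p with
  | nil => zify; fin_omega
  | @cons a b c hadj p ih =>
    rw [cycleGraph_adj'] at hadj
    rw [Walk.length_cons]
    zify at *
    fin_omega

theorem cycleGraph_dist {n : ℕ} (u v : Fin n) :
    (cycleGraph n).dist u v = min (v - u).val (u - v).val := by
  refine le_antisymm (le_min (cycleGraph_dist_le_val_sub u v) ?_) ?_
  · exact dist_comm (G := cycleGraph n) ▸ cycleGraph_dist_le_val_sub v u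
  · obtain ⟨p, hp⟩ := (cycleGraph_preconnected u v).exists_walk_length_eq_dist
    exact hp ▸ p.min_val_sub_le_length

theorem cycleGraph_dist_add_dist_add_half {n : ℕ} (u v a : Fin n) (ha : 2 * a.val = n) :
    (cycleGraph n).dist u v + (cycleGraph n).dist u (v + a) = a.val := by
  simp only [cycleGraph_dist]
  zify at *
  fin_omega

theorem cycleGraph_dist_add_left {n : ℕ} (u a : Fin n) (ha : 2 * a.val ≤ n) :
    (cycleGraph n).dist (u + a) u = a.val := by
  rw [cycleGraph_dist]
  zify at *
  fin_omega

theorem cycleGraph_dist_sub_left {n : ℕ} (u a : Fin n) (ha : 2 * a.val ≤ n) :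
    (cycleGraph n).dist (u - a) u = a.val := by
  rw [cycleGraph_dist]
  zify at *
  fin_omega

theorem two_le_ncard_setOf_cycleGraph_dist_eq {n : ℕ} (u : Fin n) {p : ℕ} (hp : 0 < p)
    (hpn : 2 * p < n) : 2 ≤ {v | (cycleGraph n).dist v u = p}.ncard := by
  set a : Fin n := ⟨p, by omega⟩
  have hap : a.val = p := rfl
  have hne : u + a ≠ u - a := fun h => by
    have := congrArg Fin.val h
    zify at *
    fin_omega
  calc 2 = ({u + a, u - a} : Set (Fin n)).ncard := (Set.ncard_pair hne).symm
    _ ≤ _ := by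
      refine Set.ncard_le_ncard ?_ (Set.toFinite _)
      rintro v (rfl | rfl)
      exacts [cycleGraph_dist_add_left u a (by omega), cycleGraph_dist_sub_left u a (by omega)]

theorem Reachable.dist_boxProd {α β : Type*} {G : SimpleGraph α} {H : SimpleGraph β}
    {x y : α × β} (h₁ : G.Reachable x.1 y.1) (h₂ : H.Reachable x.2 y.2) :
    (G □ H).dist x y = G.dist x.1 y.1 + H.dist x.2 y.2 := by
  have h : (G □ H).Reachable x y := reachable_boxProd.2 ⟨h₁, h₂⟩
  have := edist_boxProd (G := G) (H := H) x y
  rw [← h.coe_dist_eq_edist, ← h₁.coe_dist_eq_edist, ← h₂.coe_dist_eq_edist] at this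
  exact_mod_cast this

theorem setOf_dist_eq_one {V : Type*} (G : SimpleGraph V) (x : V) :
    {z | G.dist z x = 1} = G.neighborSet x := by
  ext z
  simp [dist_eq_one_iff_adj, adj_comm]

theorem ncard_setOf_dist_eq_one {V : Type*} (G : SimpleGraph V) (x : V)
    [Fintype (G.neighborSet x)] :
    {z | G.dist z x = 1}.ncard = G.degree x := by
  rw [setOf_dist_eq_one, Set.ncard_eq_toFinset_card', ← neighborFinset_def,
    card_neighborFinset_eq_degree]

def IsAntipodalMap {V : Type*} (G : SimpleGraph V) (σ : V → V) (D : ℕ) : Prop :=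
  ∀ x z, G.dist z x + G.dist z (σ x) = D

section Antipodal

variable {V : Type*} {G : SimpleGraph V} {σ : V → V} {D : ℕ}

theorem dist_antipode_self (hσ : IsAntipodalMap G σ D) (x : V) :
    G.dist (σ x) x = D := by
  simpa using hσ x (σ x)

theorem eq_antipode_of_dist_eq (hG : G.Connected) (hσ : IsAntipodalMap G σ D)
    {x z : V} (h : G.dist z x = D) : z = σ x :=
  hG.dist_eq_zero_iff.1 (by have := hσ x z; omega)

theorem antipode_ne (hσ : IsAntipodalMap G σ D) (hD : D ≠ 0) (x : V) :
    σ x ≠ x := fun h => hD (by simpa [h] using (dist_antipode_self hσ x).symm)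

theorem setOf_dist_antipode_eq (hσ : IsAntipodalMap G σ D) (x : V) (c : ℕ) :
    {z | G.dist z (σ x) = c} = {z | G.dist z x + c = D} := by
  ext z
  have := hσ x z
  simp only [Set.mem_ofPred_eq]
  omega

theorem not_mem_pair_antipode_iff (hG : G.Connected)
    (hσ : IsAntipodalMap G σ D) {x z : V} :
    z ∉ ({x, σ x} : Set V) ↔ 0 < G.dist z x ∧ G.dist z x < D := by
  have := hσ x z
  have h₁ := hG.dist_eq_zero_iff (u := z) (v := x)
  have h₂ := hG.dist_eq_zero_iff (u := z) (v := σ x)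
  simp only [Set.mem_insert_iff, Set.mem_singleton_iff, not_or, ← h₁, ← h₂]
  omega

theorem cls_singleton_antipode (hG : G.Connected) (hσ : IsAntipodalMap G σ D)
    (hD : D ≠ 0) (x : V) : cls G {x} (σ x) = {σ x} := by
  ext z
  simp only [cls, sameDists, Set.mem_ofPred_eq, Set.mem_singleton_iff, forall_eq,
    dist_antipode_self hσ]
  constructor
  · rintro ⟨-, h⟩
    exact eq_antipode_of_dist_eq hG hσ h.symm
  · rintro rfl
    exact ⟨antipode_ne hσ hD x, (dist_antipode_self hσ x).symm⟩

theorem isKARS_one_singleton [Finite V] (hG : G.Connected)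
    (hσ : IsAntipodalMap G σ D) (hD : D ≠ 0) (x : V) : IsKARS G 1 {x} := by
  refine ⟨Set.singleton_nonempty x, ⟨σ x, antipode_ne hσ hD x⟩, fun y hy => ?_,
    σ x, antipode_ne hσ hD x, by rw [cls_singleton_antipode hG hσ hD, Set.ncard_singleton]⟩
  exact (Set.ncard_pos (Set.toFinite _)).2 ⟨y, hy, fun _ _ => rfl⟩

theorem cls_pair_antipode (hG : G.Connected) (hσ : IsAntipodalMap G σ D)
    {x y : V} (hy : y ∉ ({x, σ x} : Set V)) :
    cls G {x, σ x} y = {z | G.dist z x = G.dist y x} := by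
  ext z
  rw [not_mem_pair_antipode_iff hG hσ] at hy
  have hz := not_mem_pair_antipode_iff hG hσ (x := x) (z := z)
  have hy' := hσ x y
  have hz' := hσ x z
  simp only [cls, sameDists, Set.mem_ofPred_eq, Set.forall_mem_insert, Set.mem_singleton_iff,
    forall_eq]
  constructor
  · rintro ⟨-, h, -⟩
    exact h.symm
  · intro h
    exact ⟨hz.2 (by omega), h.symm, by omega⟩

theorem isKARS_pair_antipode [Finite V] (hG : G.Connected)
    (hσ : IsAntipodalMap G σ D) (x : V) {k : ℕ}
    (hk : ∀ c, 0 < c → c < D → k ≤ {z | G.dist z x = c}.ncard)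
    (hy : ∃ y, 0 < G.dist y x ∧ G.dist y x < D ∧ {z | G.dist z x = G.dist y x}.ncard = k) :
    IsKARS G k {x, σ x} := by
  obtain ⟨y, hy₀, hyD, hyk⟩ := hy
  have hyS : y ∉ ({x, σ x} : Set V) := (not_mem_pair_antipode_iff hG hσ).2 ⟨hy₀, hyD⟩
  refine ⟨Set.insert_nonempty _ _, ⟨y, hyS⟩, fun z hz => ?_, y, hyS, ?_⟩
  · obtain ⟨hz₀, hzD⟩ := (not_mem_pair_antipode_iff hG hσ).1 hz
    rw [cls_pair_antipode hG hσ hz]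
    exact hk _ hz₀ hzD
  · rwa [cls_pair_antipode hG hσ hyS]

end Antipodal

section Torus

variable {r s : ℕ}

theorem torus_connected [NeZero r] [NeZero s] : (cycleGraph r □ cycleGraph s).Connected :=
  connected_boxProd.2 ⟨⟨cycleGraph_preconnected⟩, ⟨cycleGraph_preconnected⟩⟩

theorem torus_dist (x y : Fin r × Fin s) :
    (cycleGraph r □ cycleGraph s).dist x y =
      (cycleGraph r).dist x.1 y.1 + (cycleGraph s).dist x.2 y.2 :=
  Reachable.dist_boxProd (cycleGraph_preconnected _ _) (cycleGraph_preconnected _ _)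

theorem isAntipodalMap_torus {a : Fin r} {b : Fin s} (ha : 2 * a.val = r)
    (hb : 2 * b.val = s) :
    IsAntipodalMap (cycleGraph r □ cycleGraph s) (· + (a, b)) (a.val + b.val) := by
  intro x z
  have h₁ := cycleGraph_dist_add_dist_add_half z.1 x.1 a ha
  have h₂ := cycleGraph_dist_add_dist_add_half z.2 x.2 b hb
  simp only [torus_dist, Prod.fst_add, Prod.snd_add]
  omega

theorem ncard_torus_setOf_dist_eq_one (hr : 3 ≤ r) (hs : 3 ≤ s) (x : Fin r × Fin s) :
    {z | (cycleGraph r □ cycleGraph s).dist z x = 1}.ncard = 4 := by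
  obtain ⟨r, rfl⟩ : ∃ m, r = m + 3 := ⟨r - 3, by omega⟩
  obtain ⟨s, rfl⟩ : ∃ m, s = m + 3 := ⟨s - 3, by omega⟩
  rw [ncard_setOf_dist_eq_one, degree_boxProd, cycleGraph_degree_three_le,
    cycleGraph_degree_three_le]

theorem four_le_ncard_torus_setOf_dist_eq_add (x : Fin r × Fin s) {p q : ℕ} (hp : 0 < p)
    (hpr : 2 * p < r) (hq : 0 < q) (hqs : 2 * q < s) :
    4 ≤ {z | (cycleGraph r □ cycleGraph s).dist z x = p + q}.ncard := by
  have hprod : {u | (cycleGraph r).dist u x.1 = p} ×ˢ {v | (cycleGraph s).dist v x.2 = q} ⊆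
      {z | (cycleGraph r □ cycleGraph s).dist z x = p + q} := by
    rintro z ⟨hz₁, hz₂⟩
    simp only [Set.mem_ofPred_eq, torus_dist] at hz₁ hz₂ ⊢
    rw [hz₁, hz₂]
  calc 4 = 2 * 2 := rfl
    _ ≤ {u | (cycleGraph r).dist u x.1 = p}.ncard * {v | (cycleGraph s).dist v x.2 = q}.ncard :=
      Nat.mul_le_mul (two_le_ncard_setOf_cycleGraph_dist_eq x.1 hp hpr)
        (two_le_ncard_setOf_cycleGraph_dist_eq x.2 hq hqs)
    _ ≤ _ := Set.ncard_prod.symm.le.trans (Set.ncard_le_ncard hprod (Set.toFinite _))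

theorem isKARS_four_torus (hr : 4 ≤ r) (hs : 4 ≤ s) {a : Fin r} {b : Fin s}
    (ha : 2 * a.val = r) (hb : 2 * b.val = s) (x : Fin r × Fin s) :
    IsKARS (cycleGraph r □ cycleGraph s) 4 {x, x + (a, b)} := by
  have : NeZero r := ⟨by omega⟩
  have : NeZero s := ⟨by omega⟩
  have hσ := isAntipodalMap_torus ha hb
  have hsphere₁ := ncard_torus_setOf_dist_eq_one (by omega) (by omega) x
  refine isKARS_pair_antipode torus_connected hσ x (fun c hc₀ hcD => ?_) ?_
  · rcases (by omega : c = 1 ∨ c + 1 = a.val + b.val ∨ 2 ≤ c ∧ c + 2 ≤ a.val + b.val)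
      with rfl | hc | hc
    · exact hsphere₁.ge
    · have hfar : {z | (cycleGraph r □ cycleGraph s).dist z x = c} =
          {z | (cycleGraph r □ cycleGraph s).dist z (x + (a, b)) = 1} := by
        rw [setOf_dist_antipode_eq hσ]
        ext z
        simp only [Set.mem_ofPred_eq]
        omega
      rw [hfar, ncard_torus_setOf_dist_eq_one (by omega) (by omega)]
    · obtain ⟨p, q, rfl, hp, hpr, hq, hqs⟩ :
          ∃ p q, c = p + q ∧ 0 < p ∧ 2 * p < r ∧ 0 < q ∧ 2 * q < s :=
        ⟨min (c - 1) (a.val - 1), c - min (c - 1) (a.val - 1), by omega, by omega, by omega,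
          by omega, by omega⟩
      exact four_le_ncard_torus_setOf_dist_eq_add x hp hpr hq hqs
  · obtain ⟨y, hy⟩ := Set.nonempty_of_ncard_ne_zero
      (s := {z | (cycleGraph r □ cycleGraph s).dist z x = 1}) (by omega)
    rw [Set.mem_ofPred_eq] at hy
    exact ⟨y, by omega, by omega, hy ▸ hsphere₁⟩

end Torus

theorem IsKARS.eq {V : Type*} {G : SimpleGraph V} {S : Set V} {k l : ℕ} (hk : IsKARS G k S)
    (hl : IsKARS G l S) : k = l := by
  obtain ⟨-, -, hk, x, hx, rfl⟩ := hk
  obtain ⟨-, -, hl, y, hy, rfl⟩ := hl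
  exact le_antisymm (hk y hy) (hl x hx)

theorem adim_eq_two {V : Type*} [Finite V] {G : SimpleGraph V} {k : ℕ} {x y : V} (hxy : x ≠ y)
    (hk : IsKARS G k {x, y}) (hsingle : ∀ v, ¬IsKARS G k {v}) : adim G k = 2 := by
  refine le_antisymm (sInf_le ⟨{x, y}, hk, by simp [Set.ncard_pair hxy]⟩) (le_sInf ?_)
  rintro _ ⟨S, hS, rfl⟩
  have h₁ : S.ncard ≠ 0 := ((Set.ncard_pos (Set.toFinite _)).2 hS.1).ne'
  have h₂ : S.ncard ≠ 1 := fun h => by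
    obtain ⟨v, rfl⟩ := Set.ncard_eq_one.1 h
    exact hsingle v hS
  change ((2 : ℕ) : ℕ∞) ≤ S.ncard
  exact_mod_cast (by omega : 2 ≤ S.ncard)

end SimpleGraph

/-- For even `r, s ≥ 4`, `adim_4(C_r □ C_s) = 2`: any vertex together with its unique
antipodal vertex is a 4-ARS, and every singleton is only a 1-ARS. -/
theorem stmt3 (r s : ℕ) (hr : 4 ≤ r) (hs : 4 ≤ s) (hre : Even r) (hse : Even s) :
    adim ((cycleGraph r).boxProd (cycleGraph s)) 4 = 2 ∧
    (∀ x : Fin r × Fin s,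
      IsKARS ((cycleGraph r).boxProd (cycleGraph s)) 4
        ({x, (x.1 + ⟨r / 2, by omega⟩, x.2 + ⟨s / 2, by omega⟩)} : Set (Fin r × Fin s))) ∧
    (∀ x : Fin r × Fin s, IsKARS ((cycleGraph r).boxProd (cycleGraph s)) 1 {x}) := by
  have : NeZero r := ⟨by omega⟩
  have : NeZero s := ⟨by omega⟩
  set a : Fin r := ⟨r / 2, by omega⟩
  set b : Fin s := ⟨s / 2, by omega⟩
  have ha : 2 * a.val = r := Nat.two_mul_div_two_of_even hre
  have hb : 2 * b.val = s := Nat.two_mul_div_two_of_even hse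
  have hσ := isAntipodalMap_torus ha hb
  have hD : a.val + b.val ≠ 0 := by omega
  have hpair : ∀ x, IsKARS (cycleGraph r □ cycleGraph s) 4 {x, x + (a, b)} :=
    isKARS_four_torus hr hs ha hb
  have hsingle : ∀ x, IsKARS (cycleGraph r □ cycleGraph s) 1 {x} :=
    isKARS_one_singleton torus_connected hσ hD
  refine ⟨adim_eq_two (antipode_ne hσ hD 0).symm (hpair 0)
    (fun v hv => absurd (hv.eq (hsingle v)) (by decide)), hpair, hsingle⟩
end

section
/- For r ≥ 4, adim_1(K_r □ K_r) = 3: the set {(u_1,v_1),(u_1,v_2),(u_2,v_1)} is a 1-ARS (the vertex (u_2,v_2) forms a singleton class), and no set of size at most 2 is a 1-ARS. -/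
/-!
Distances in `K_r □ K_r` count the coordinates in which two vertices differ. Given
`S ⊆ {s, t}` and `x ∉ S`, if a coordinate of `x` differs from that coordinate of both `s`
and `t`, replacing it by a fourth value (here `r ≥ 4` is needed) keeps all distances to `S`;
otherwise `x` is a corner of the rectangle spanned by `s` and `t`, and the opposite corner
has the same distances. So no set of at most two vertices has a singleton class. For the
set `{(u₁,v₁), (u₁,v₂), (u₂,v₁)}`, the distances `2, 1, 1` force both coordinates of a
vertex, so `(u₂,v₂)` is alone in its class.
-/

open SimpleGraph

lemma self_mem_cls {V : Type*} {G : SimpleGraph V} {S : Set V} {x : V} (hx : x ∉ S) :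
    x ∈ cls G S x :=
  ⟨hx, fun _ _ => rfl⟩

lemma adim_eq_of_isKARS {V : Type*} {G : SimpleGraph V} {k : ℕ} {S : Set V}
    (hS : IsKARS G k S) (hmin : ∀ T : Set V, T.ncard < S.ncard → ¬ IsKARS G k T) :
    adim G k = S.ncard :=
  le_antisymm (sInf_le ⟨S, hS, rfl⟩) (le_sInf <| by
    rintro _ ⟨T, hT, rfl⟩
    exact Nat.cast_le.mpr (not_lt.mp fun hlt => hmin T hlt hT))

lemma isKARS_one_of_cls_eq_singleton {V : Type*} [Finite V] {G : SimpleGraph V} {S : Set V}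
    {x : V} (hS : S.Nonempty) (hcls : cls G S x = {x}) : IsKARS G 1 S := by
  have hxS : x ∉ S := (hcls.symm ▸ Set.mem_singleton x : x ∈ cls G S x).1
  refine ⟨hS, ⟨x, hxS⟩, fun y hy => ?_, x, hxS, by rw [hcls, Set.ncard_singleton]⟩
  exact Nat.one_le_iff_ne_zero.mpr <| (Set.ncard_ne_zero_of_mem (self_mem_cls hy))

lemma sameDists_pair {V : Type*} {G : SimpleGraph V} {s t x y : V} :
    sameDists G {s, t} x y ↔ G.dist x s = G.dist y s ∧ G.dist x t = G.dist y t := by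
  simp [sameDists]

lemma Set.exists_eq_pair_of_ncard_le_two {V : Type*} {S : Set V} (hfin : S.Finite)
    (hne : S.Nonempty) (h2 : S.ncard ≤ 2) : ∃ s t, S = {s, t} := by
  have hpos := (Set.ncard_pos hfin).mpr hne
  interval_cases h : S.ncard
  · obtain ⟨s, rfl⟩ := Set.ncard_eq_one.mp h
    exact ⟨s, s, (Set.pair_eq_singleton s).symm⟩
  · obtain ⟨s, t, -, rfl⟩ := Set.ncard_eq_two.mp h
    exact ⟨s, t, rfl⟩

lemma exists_ne_ne_ne_of_three_lt_card {α : Type*} [Fintype α] (h : 3 < Fintype.card α) (a b c : α) :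
    ∃ d, d ≠ a ∧ d ≠ b ∧ d ≠ c := by
  classical
  obtain ⟨d, -, hd⟩ := Finset.exists_mem_notMem_of_card_lt_card
    (s := {a, b, c}) (t := Finset.univ) (Finset.card_le_three.trans_lt h)
  simp only [Finset.mem_insert, Finset.mem_singleton, not_or] at hd
  exact ⟨d, hd⟩

abbrev rookGraph (α β : Type*) : SimpleGraph (α × β) :=
  (⊤ : SimpleGraph α).boxProd (⊤ : SimpleGraph β)

section Rook

variable {α β : Type*}

lemma rookGraph_dist_eq [DecidableEq α] [DecidableEq β] (x y : α × β) :
    (rookGraph α β).dist x y = (if x.1 = y.1 then 0 else 1) + (if x.2 = y.2 then 0 else 1) := by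
  rw [SimpleGraph.dist, edist_boxProd, edist_top, edist_top]
  split_ifs <;> rfl

variable [Fintype α] [Fintype β]

lemma rookGraph_exists_ne_mem_cls_pair (hα : 3 < Fintype.card α) (hβ : 3 < Fintype.card β)
    {s t x : α × β} (hx : x ∉ ({s, t} : Set (α × β))) :
    ∃ y ≠ x, y ∈ cls (rookGraph α β) {s, t} x := by
  classical
  obtain ⟨a, b⟩ := x
  obtain ⟨s1, s2⟩ := s
  obtain ⟨t1, t2⟩ := t
  simp only [Set.mem_insert_iff, Set.mem_singleton_iff, Prod.ext_iff, not_or, not_and_or] at hx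
  by_cases ha : a ≠ s1 ∧ a ≠ t1
  · obtain ⟨a', h1, h2, h3⟩ := exists_ne_ne_ne_of_three_lt_card hα s1 t1 a
    refine ⟨(a', b), by simp [h3], by simp [Prod.ext_iff, h1, h2], ?_⟩
    simp [sameDists_pair, rookGraph_dist_eq, ha.1, ha.2, h1, h2]
  by_cases hb : b ≠ s2 ∧ b ≠ t2
  · obtain ⟨b', h1, h2, h3⟩ := exists_ne_ne_ne_of_three_lt_card hβ s2 t2 b
    refine ⟨(a, b'), by simp [h3], by simp [Prod.ext_iff, h1, h2], ?_⟩
    simp [sameDists_pair, rookGraph_dist_eq, hb.1, hb.2, h1, h2]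
  simp only [not_and_or, not_not] at ha hb
  -- `x` is a corner of the rectangle spanned by `s` and `t`; the opposite corner will do.
  rcases ha with rfl | rfl <;> rcases hb with rfl | rfl
  · simp at hx
  · have ⟨h2, h1⟩ : b ≠ s2 ∧ a ≠ t1 := by simpa using hx
    refine ⟨(t1, s2), by simp [h1.symm], by simp [Prod.ext_iff, h1.symm, h2.symm], ?_⟩
    simp [sameDists_pair, rookGraph_dist_eq, h1, h2, h1.symm, h2.symm]
  · have ⟨h1, h2⟩ : a ≠ s1 ∧ b ≠ t2 := by simpa using hx
    refine ⟨(s1, t2), by simp [h1.symm], by simp [Prod.ext_iff, h1.symm, h2.symm], ?_⟩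
    simp [sameDists_pair, rookGraph_dist_eq, h1, h2, h1.symm, h2.symm]
  · simp at hx

lemma rookGraph_not_isKARS_one_of_ncard_le_two (hα : 3 < Fintype.card α) (hβ : 3 < Fintype.card β)
    {S : Set (α × β)} (hS : S.ncard ≤ 2) : ¬ IsKARS (rookGraph α β) 1 S := by
  rintro ⟨hne, -, -, x, hx, hcard⟩
  obtain ⟨s, t, rfl⟩ := Set.exists_eq_pair_of_ncard_le_two (Set.toFinite S) hne hS
  obtain ⟨y, hyx, hy⟩ := rookGraph_exists_ne_mem_cls_pair hα hβ hx
  have := (Set.one_lt_ncard (Set.toFinite _)).mpr ⟨x, self_mem_cls hx, y, hy, hyx.symm⟩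
  omega

end Rook

section Corner

variable {α β : Type*} {a₀ a₁ : α} {b₀ b₁ : β}

lemma ncard_corner_triple (ha : a₀ ≠ a₁) (hb : b₀ ≠ b₁) :
    ({(a₀, b₀), (a₀, b₁), (a₁, b₀)} : Set (α × β)).ncard = 3 := by
  rw [Set.ncard_eq_three]
  refine ⟨_, _, _, ?_, ?_, ?_, rfl⟩ <;> simp [ha, hb]

lemma rookGraph_cls_corner_triple (ha : a₀ ≠ a₁) (hb : b₀ ≠ b₁) :
    cls (rookGraph α β) {(a₀, b₀), (a₀, b₁), (a₁, b₀)} (a₁, b₁) = {(a₁, b₁)} := by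
  classical
  ext ⟨a, b⟩
  simp only [cls, sameDists, Set.mem_insert_iff, Set.mem_singleton_iff, forall_eq_or_imp,
    forall_eq, rookGraph_dist_eq, Prod.mk.injEq]
  constructor
  · rintro ⟨-, h₁, h₂, h₃⟩
    simp only [if_neg ha.symm, if_neg hb.symm, if_true] at h₁ h₂ h₃
    split_ifs at h₁ h₂ h₃ <;> simp_all
  · rintro ⟨rfl, rfl⟩
    simp [ha.symm, hb.symm]

end Corner

/-- For `r ≥ 4`, `adim_1(K_r □ K_r) = 3`: the set `{(u_1,v_1), (u_1,v_2), (u_2,v_1)}`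
is a 1-ARS (the vertex `(u_2,v_2)` forms a singleton class), and no set of size at most
2 is a 1-ARS. -/
theorem stmt17 (r : ℕ) (hr : 4 ≤ r) :
    adim ((⊤ : SimpleGraph (Fin r)).boxProd (⊤ : SimpleGraph (Fin r))) 1 = 3 ∧
    IsKARS ((⊤ : SimpleGraph (Fin r)).boxProd (⊤ : SimpleGraph (Fin r))) 1
      ({(⟨0, by omega⟩, ⟨0, by omega⟩), (⟨0, by omega⟩, ⟨1, by omega⟩),
        (⟨1, by omega⟩, ⟨0, by omega⟩)} : Set (Fin r × Fin r)) ∧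
    cls ((⊤ : SimpleGraph (Fin r)).boxProd (⊤ : SimpleGraph (Fin r)))
      ({(⟨0, by omega⟩, ⟨0, by omega⟩), (⟨0, by omega⟩, ⟨1, by omega⟩),
        (⟨1, by omega⟩, ⟨0, by omega⟩)} : Set (Fin r × Fin r))
      ((⟨1, by omega⟩, ⟨1, by omega⟩)) = {(⟨1, by omega⟩, ⟨1, by omega⟩)} ∧
    ∀ S : Set (Fin r × Fin r), S.ncard ≤ 2 →
      ¬ IsKARS ((⊤ : SimpleGraph (Fin r)).boxProd (⊤ : SimpleGraph (Fin r))) 1 S := by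
  have h01 : (⟨0, by omega⟩ : Fin r) ≠ ⟨1, by omega⟩ := by simp [Fin.ext_iff]
  have hcard : 3 < Fintype.card (Fin r) := by rw [Fintype.card_fin]; omega
  have hcls := rookGraph_cls_corner_triple h01 h01
  have h3 := ncard_corner_triple h01 h01
  have hsmall : ∀ S : Set (Fin r × Fin r), S.ncard ≤ 2 → ¬ IsKARS (rookGraph _ _) 1 S :=
    fun S hS => rookGraph_not_isKARS_one_of_ncard_le_two hcard hcard hS
  have hK := isKARS_one_of_cls_eq_singleton (Set.insert_nonempty _ _) hcls
  refine ⟨?_, hK, hcls, hsmall⟩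
  rw [adim_eq_of_isKARS hK fun T hT => hsmall T (by omega), h3]
  rfl
end
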